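/- arXiv:1010.1468 — 2 statements merged into one kernel-verified Lean document; each statement's English description precedes it below -/
import Mathlib

section
/- Let p ∈ (1,3), λ ∈ ℝ, and set M = max{−λ, 0}. Suppose v₀ > 2M + 2·8^{(p−1)/(3−p)}. Suppose v : [0, u₁] → ℝ is differentiable with v(0) = v₀, v(u₁) = 2u₁^{p−1} + 2M, v(u) > 2u^{p−1} + 2M for u ∈ [0,u₁), and v'(u) = u + u(λ − u^{p−1})/v(u) on [0,u₁]. Then a contradiction follows; that is, no such u₁ > 0 exists. -/
/-!
While `v` stays above `2 u ^ (p - 1) + 2 max (-λ) 0`, the ratio `(λ - u ^ (p - 1)) / v` is at least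
`-1/2`, so `v' ≥ u / 2` and `v u₁ ≥ v₀ + u₁ ^ 2 / 4`. Since `p - 1 < 2`, the quadratic term absorbs
`2 u₁ ^ (p - 1)` up to the constant `2 · 8 ^ ((p - 1) / (3 - p))`, so `v u₁` is strictly above the
threshold it is supposed to meet.
-/

open Set

/-- Below the threshold `c ^ (1 / (2 - a))` the power is bounded by the constant term; above it,
`u ^ (2 - a) ≥ c` makes `u ^ a ≤ u ^ 2 / c`. -/
lemma rpow_le_sq_div_add_rpow {a c u : ℝ} (ha0 : 0 ≤ a) (ha2 : a < 2) (hc : 0 < c)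
    (hu : 0 ≤ u) : u ^ a ≤ u ^ 2 / c + c ^ (a / (2 - a)) := by
  have h2a : 0 < 2 - a := by linarith
  set R := c ^ (1 / (2 - a)) with hR
  have hRpos : 0 < R := Real.rpow_pos_of_pos hc _
  rcases le_or_gt u R with huR | huR
  · have hRa : R ^ a = c ^ (a / (2 - a)) := by
      rw [hR, ← Real.rpow_mul hc.le, one_div_mul_eq_div]
    calc u ^ a ≤ R ^ a := Real.rpow_le_rpow hu huR ha0
      _ = c ^ (a / (2 - a)) := hRa
      _ ≤ u ^ 2 / c + c ^ (a / (2 - a)) := le_add_of_nonneg_left (by positivity)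
  · have hupos : 0 < u := hRpos.trans huR
    have hcu : c ≤ u ^ (2 - a) := by
      calc c = R ^ (2 - a) := by
            rw [hR, ← Real.rpow_mul hc.le, one_div_mul_cancel h2a.ne', Real.rpow_one]
        _ ≤ u ^ (2 - a) := Real.rpow_le_rpow hRpos.le huR.le h2a.le
    have hsplit : u ^ 2 = u ^ (2 - a) * u ^ a := by
      rw [← Real.rpow_add hupos, sub_add_cancel, Real.rpow_two]
    have hua : u ^ a ≤ u ^ 2 / c := by
      rw [le_div_iff₀ hc, hsplit, mul_comm]
      exact mul_le_mul_of_nonneg_right hcu (Real.rpow_nonneg hu a)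
    linarith [Real.rpow_pos_of_pos hc (a / (2 - a))]

lemma half_le_add_mul_div {u w lam v : ℝ} (hu : 0 ≤ u) (hw : 0 ≤ w)
    (hv : 2 * w + 2 * max (-lam) 0 ≤ v) : u / 2 ≤ u + u * (lam - w) / v := by
  rcases (show 0 ≤ v by linarith [le_max_right (-lam) 0]).eq_or_lt with hv0 | hvpos
  · rw [← hv0, div_zero]
    linarith
  · have hratio : -(1 / 2) ≤ (lam - w) / v := by
      rw [le_div_iff₀ hvpos]
      linarith [le_max_left (-lam) 0]
    rw [mul_div_assoc]
    nlinarith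

lemma add_sq_sub_sq_div_four_le {v v' : ℝ → ℝ} {a b : ℝ} (hab : a ≤ b)
    (hd : ∀ u ∈ Icc a b, HasDerivAt v (v' u) u) (hv' : ∀ u ∈ Ioo a b, u / 2 ≤ v' u) :
    v a + (b ^ 2 - a ^ 2) / 4 ≤ v b := by
  have hg : ∀ u ∈ Icc a b, HasDerivAt (fun x => v x - x ^ 2 / 4) (v' u - u / 2) u := by
    intro u hu
    refine ((hd u hu).sub ((hasDerivAt_pow 2 u).div_const 4)).congr_deriv ?_
    push_cast
    ring
  have hmono : MonotoneOn (fun x => v x - x ^ 2 / 4) (Icc a b) := by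
    refine monotoneOn_of_deriv_nonneg (convex_Icc a b)
      (fun u hu => (hg u hu).continuousAt.continuousWithinAt)
      (fun u hu => ?_) (fun u hu => ?_) <;> rw [interior_Icc] at hu
    · exact (hg u (Ioo_subset_Icc_self hu)).differentiableAt.differentiableWithinAt
    · rw [(hg u (Ioo_subset_Icc_self hu)).deriv]
      linarith [hv' u hu]
  have := hmono (left_mem_Icc.2 hab) (right_mem_Icc.2 hab) hab
  simp only at this
  linarith

theorem stmt_5 (p lam v₀ u₁ : ℝ) (hp1 : 1 < p) (hp3 : p < 3)
    (hv₀ : v₀ > 2 * max (-lam) 0 + 2 * (8 : ℝ) ^ ((p - 1) / (3 - p)))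
    (hu₁ : 0 < u₁) (v : ℝ → ℝ)
    (hd : ∀ u ∈ Set.Icc 0 u₁,
      HasDerivAt v (u + u * (lam - u ^ (p - 1)) / v u) u)
    (h0 : v 0 = v₀)
    (hend : v u₁ = 2 * u₁ ^ (p - 1) + 2 * max (-lam) 0)
    (habove : ∀ u ∈ Set.Ico 0 u₁, v u > 2 * u ^ (p - 1) + 2 * max (-lam) 0) :
    False := by
  have hgrowth : v₀ + u₁ ^ 2 / 4 ≤ v u₁ := by
    have := add_sq_sub_sq_div_four_le hu₁.le hd fun u hu =>
      half_le_add_mul_div hu.1.le (Real.rpow_nonneg hu.1.le _)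
        (habove u (Ioo_subset_Ico_self hu)).le
    simpa [h0] using this
  have hpow : u₁ ^ (p - 1) ≤ u₁ ^ 2 / 8 + (8 : ℝ) ^ ((p - 1) / (3 - p)) := by
    have := rpow_le_sq_div_add_rpow (c := 8) (by linarith : 0 ≤ p - 1) (by linarith)
      (by norm_num) hu₁.le
    rwa [show 2 - (p - 1) = 3 - p by ring] at this
  linarith
end

section
/- Let p ∈ (1,2], λ ≤ 0, α > 0, A > 0 with A^{p−2} ≤ α, and t₀ ≥ (α² − λ)/2. Define v(x,t) = A·exp(αx + (t+t₀)²) for x ≥ 0, t ≥ 0. Then ∂ₜv − ∂ₓ²v + v∂ₓv − v^p + λv ≥ 0 on [0,∞) × [0,∞). -/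
/-!
Every derivative of `v = A exp (α x + (t + t₀)²)` is a multiple of `v`, so the residual equals
`v (2 (t + t₀) - α² + λ) + (α v² - v ^ p)`. The first term is nonnegative by the choice of `t₀`.
On the quarter-plane `v ≥ A`, so for `p ≤ 2` we get `v ^ p = v ^ (p - 2) v² ≤ A ^ (p - 2) v² ≤ α v²`.
-/

open Real

lemma hasDerivAt_const_mul_exp_affine (k a c x : ℝ) :
    HasDerivAt (fun w => k * exp (a * w + c)) (k * a * exp (a * x + c)) x := by
  have h : HasDerivAt (fun w => a * w + c) a x := by
    simpa using ((hasDerivAt_id x).const_mul a).add_const c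
  simpa [mul_comm, mul_left_comm, mul_assoc] using h.exp.const_mul k

lemma deriv_const_mul_exp_affine (k a c : ℝ) :
    deriv (fun w => k * exp (a * w + c)) = fun x => k * a * exp (a * x + c) :=
  funext fun x => (hasDerivAt_const_mul_exp_affine k a c x).deriv

lemma deriv_const_mul_exp_add_sq (k c t₀ t : ℝ) :
    deriv (fun s => k * exp (c + (s + t₀) ^ 2)) t = k * (2 * (t + t₀)) * exp (c + (t + t₀) ^ 2) := by
  have h : HasDerivAt (fun s => c + (s + t₀) ^ 2) (2 * (t + t₀)) t := by
    simpa using (((hasDerivAt_id t).add_const t₀).pow 2).const_add c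
  exact (h.exp.const_mul k).deriv.trans (by ring)

lemma rpow_le_rpow_sub_two_mul_sq {A v p : ℝ} (hA : 0 < A) (hAv : A ≤ v) (hp : p ≤ 2) :
    v ^ p ≤ A ^ (p - 2) * v ^ 2 := by
  have hv : 0 < v := hA.trans_le hAv
  calc v ^ p = v ^ (p - 2) * v ^ 2 := by
        rw [← rpow_natCast, ← rpow_add hv]; norm_num
    _ ≤ A ^ (p - 2) * v ^ 2 :=
        mul_le_mul_of_nonneg_right (rpow_le_rpow_of_nonpos hA hAv (by linarith)) (sq_nonneg v)

theorem stmt_11_general (p lam α A t₀ : ℝ) (hp2 : p ≤ 2)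
    (hα : 0 < α) (hA : 0 < A) (hAp : A ^ (p - 2) ≤ α)
    (ht₀ : t₀ ≥ (α ^ 2 - lam) / 2) :
    ∀ x ≥ (0 : ℝ), ∀ t ≥ (0 : ℝ),
      deriv (fun s => A * Real.exp (α * x + (s + t₀) ^ 2)) t
        - deriv (fun z => deriv (fun w => A * Real.exp (α * w + (t + t₀) ^ 2)) z) x
        + (A * Real.exp (α * x + (t + t₀) ^ 2)) *
            deriv (fun w => A * Real.exp (α * w + (t + t₀) ^ 2)) x
        - (A * Real.exp (α * x + (t + t₀) ^ 2)) ^ p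
        + lam * (A * Real.exp (α * x + (t + t₀) ^ 2)) ≥ 0 := by
  intro x hx t ht
  rw [deriv_const_mul_exp_add_sq, deriv_const_mul_exp_affine, deriv_const_mul_exp_affine]
  set E := exp (α * x + (t + t₀) ^ 2)
  have hE : 1 ≤ E := one_le_exp (by positivity)
  have hAv : A ≤ A * E := le_mul_of_one_le_right hA.le hE
  have hpow : (A * E) ^ p ≤ α * (A * E) ^ 2 :=
    (rpow_le_rpow_sub_two_mul_sq hA hAv hp2).trans (by gcongr)
  have hτ : 0 ≤ 2 * (t + t₀) - α ^ 2 + lam := by linarith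
  calc A * (2 * (t + t₀)) * E - A * α * α * E + A * E * (A * α * E) - (A * E) ^ p + lam * (A * E)
      = A * E * (2 * (t + t₀) - α ^ 2 + lam) + (α * (A * E) ^ 2 - (A * E) ^ p) := by ring
    _ ≥ 0 := add_nonneg (by positivity) (by linarith)

theorem stmt_11 (p lam α A t₀ : ℝ) (hp1 : 1 < p) (hp2 : p ≤ 2) (hlam : lam ≤ 0)
    (hα : 0 < α) (hA : 0 < A) (hAp : A ^ (p - 2) ≤ α)
    (ht₀ : t₀ ≥ (α ^ 2 - lam) / 2) :
    ∀ x ≥ (0 : ℝ), ∀ t ≥ (0 : ℝ),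
      deriv (fun s => A * Real.exp (α * x + (s + t₀) ^ 2)) t
        - deriv (fun z => deriv (fun w => A * Real.exp (α * w + (t + t₀) ^ 2)) z) x
        + (A * Real.exp (α * x + (t + t₀) ^ 2)) *
            deriv (fun w => A * Real.exp (α * w + (t + t₀) ^ 2)) x
        - (A * Real.exp (α * x + (t + t₀) ^ 2)) ^ p
        + lam * (A * Real.exp (α * x + (t + t₀) ^ 2)) ≥ 0 :=
  stmt_11_general p lam α A t₀ hp2 hα hA hAp ht₀
end
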